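/- arXiv:2210.16553 — 5 statements merged into one kernel-verified Lean document; each statement's English description precedes it below -/
import Mathlib

section
/- Let L₁,…,L_d be d homogeneous linear forms on ℝ^d with nonzero determinant D, and let δ₁,…,δ_d be positive reals whose product equals |D|. Then there exists a nonzero integer vector v ∈ ℤ^d such that |L₁(v)| ≤ δ₁ and |L_i(v)| < δ_i for i = 2,…,d. -/
/-!
The region `|Lᵢ x| < δᵢ'` is a symmetric convex parallelepiped of volume `2ᵈ ∏ δᵢ' / |D|`, so by
Minkowski's convex body theorem it contains a nonzero integer point as soon as `∏ δᵢ' > |D|`.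
Enlarging `δ₁` to `δ₁ + ε` gives, for each `ε ∈ (0, 1]`, a nonzero integer point with
`|L₁ v| < δ₁ + ε` and `|Lᵢ v| < δᵢ` otherwise. Since `L` is invertible, all these points lie in a
bounded region, hence among finitely many integer vectors; the one minimising `|L₁ v|` then
satisfies `|L₁ v| ≤ δ₁`.
-/

open MeasureTheory Set Matrix

theorem Set.Finite.exists_le_of_forall_exists_lt_add {α : Type*} {S : Set α} (hS : S.Finite)
    (g : α → ℝ) {a : ℝ} (h : ∀ ε > 0, ∃ x ∈ S, g x < a + ε) : ∃ x ∈ S, g x ≤ a := by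
  obtain ⟨x, hxS, -⟩ := h 1 one_pos
  obtain ⟨x₀, hx₀S, hx₀min⟩ := S.exists_min_image g hS ⟨x, hxS⟩
  refine ⟨x₀, hx₀S, le_of_not_gt fun hlt => ?_⟩
  obtain ⟨y, hyS, hy⟩ := h (g x₀ - a) (sub_pos.mpr hlt)
  linarith [hx₀min y hyS]

section IntegerPoints

variable {ι : Type*} [Fintype ι]

theorem exists_ne_zero_int_mem_of_two_pow_card_lt_volume {s : Set (ι → ℝ)}
    (h_symm : ∀ x ∈ s, -x ∈ s) (h_conv : Convex ℝ s) (h : 2 ^ Fintype.card ι < volume s) :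
    ∃ v : ι → ℤ, v ≠ 0 ∧ (fun i => (v i : ℝ)) ∈ s := by
  classical
  let b := Pi.basisFun ℝ ι
  have hF : volume (ZSpan.fundamentalDomain b) = 1 := by
    simp [b, ZSpan.fundamentalDomain_pi_basisFun, volume_pi_pi]
  have : Countable (Submodule.span ℤ (range b)).toAddSubgroup :=
    inferInstanceAs (Countable (Submodule.span ℤ (range b)))
  obtain ⟨x, hx0, hxs⟩ := exists_ne_zero_mem_lattice_of_measure_mul_two_pow_lt_measure
    (ZSpan.isAddFundamentalDomain' b volume) h_symm h_conv (by simpa [hF] using h)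
  have hx : ∀ i, ∃ n : ℤ, (n : ℝ) = (x : ι → ℝ) i := by
    simpa [b] using ((Pi.basisFun ℝ ι).mem_span_iff_repr_mem ℤ _).mp x.2
  choose v hv using hx
  have hvx : (fun i => (v i : ℝ)) = x := funext hv
  refine ⟨v, ?_, hvx ▸ hxs⟩
  rintro rfl
  exact hx0 (Subtype.ext (hvx.symm.trans (funext fun _ => Int.cast_zero)))

theorem finite_setOf_intCast_mem_of_isCompact {K : Set (ι → ℝ)} (hK : IsCompact K) :
    {v : ι → ℤ | (fun i => (v i : ℝ)) ∈ K}.Finite :=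
  ((Topology.IsClosedEmbedding.piMap fun _ => Int.isClosedEmbedding_coe_real).isCompact_preimage
    hK).finite_of_discrete

variable [DecidableEq ι]

theorem volume_preimage_toLin'_pi_Ioo (L : Matrix ι ι ℝ) (hL : L.det ≠ 0) {δ : ι → ℝ}
    (hδ : ∀ i, 0 ≤ δ i) :
    volume (toLin' L ⁻¹' univ.pi fun i => Ioo (-δ i) (δ i)) =
      ENNReal.ofReal (2 ^ Fintype.card ι * (∏ i, δ i) / |L.det|) := by
  rw [Measure.addHaar_preimage_linearMap volume (by rwa [LinearMap.det_toLin']),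
    LinearMap.det_toLin', volume_pi_pi]
  simp_rw [Real.volume_Ioo, sub_neg_eq_add, ← two_mul]
  rw [← ENNReal.ofReal_prod_of_nonneg fun i _ => by linarith [hδ i], ← ENNReal.ofReal_mul
    (abs_nonneg _), Finset.prod_mul_distrib, Finset.prod_const, Finset.card_univ, abs_inv,
    inv_mul_eq_div]

theorem exists_ne_zero_int_abs_mulVec_lt (L : Matrix ι ι ℝ) (hL : L.det ≠ 0) {δ : ι → ℝ}
    (hδ : ∀ i, 0 ≤ δ i) (hprod : |L.det| < ∏ i, δ i) :
    ∃ v : ι → ℤ, v ≠ 0 ∧ ∀ i, |(L *ᵥ fun j => (v j : ℝ)) i| < δ i := by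
  set s := toLin' L ⁻¹' univ.pi fun i => Ioo (-δ i) (δ i)
  have h_symm : ∀ x ∈ s, -x ∈ s := by
    intro x hx i _
    simpa [s, mulVec_neg, and_comm, neg_lt] using hx i trivial
  have h_conv : Convex ℝ s := (convex_pi fun i _ => convex_Ioo _ _).linear_preimage _
  have h_vol : 2 ^ Fintype.card ι < volume s := by
    rw [volume_preimage_toLin'_pi_Ioo L hL hδ, ← ENNReal.ofReal_ofNat,
      ← ENNReal.ofReal_pow zero_le_two, ENNReal.ofReal_lt_ofReal_iff_of_nonneg (by positivity),
      lt_div_iff₀ (abs_pos.mpr hL)]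
    gcongr
  obtain ⟨v, hv0, hvs⟩ := exists_ne_zero_int_mem_of_two_pow_card_lt_volume h_symm h_conv h_vol
  exact ⟨v, hv0, fun i => abs_lt.mpr (hvs i trivial)⟩

theorem finite_setOf_abs_mulVec_le (L : Matrix ι ι ℝ) (hL : L.det ≠ 0) (c : ι → ℝ) :
    {v : ι → ℤ | ∀ i, |(L *ᵥ fun j => (v j : ℝ)) i| ≤ c i}.Finite := by
  have hK : IsCompact ((L⁻¹ *ᵥ ·) '' univ.pi fun i => Icc (-c i) (c i)) :=
    (isCompact_univ_pi fun i => isCompact_Icc).image (continuous_const.matrix_mulVec continuous_id)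
  refine (finite_setOf_intCast_mem_of_isCompact hK).subset fun v hv => ?_
  refine ⟨L *ᵥ fun j => (v j : ℝ), fun i _ => abs_le.mp (hv i), ?_⟩
  beta_reduce
  rw [mulVec_mulVec, nonsing_inv_mul _ (isUnit_iff_ne_zero.mpr hL), one_mulVec]

theorem exists_ne_zero_int_abs_mulVec_lt_add (L : Matrix ι ι ℝ) (hL : L.det ≠ 0) {δ : ι → ℝ}
    (hδ : ∀ i, 0 < δ i) (hprod : |L.det| ≤ ∏ i, δ i) (i₀ : ι) {ε : ℝ} (hε : 0 < ε) :
    ∃ v : ι → ℤ, v ≠ 0 ∧ |(L *ᵥ fun j => (v j : ℝ)) i₀| < δ i₀ + ε ∧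
      ∀ i ≠ i₀, |(L *ᵥ fun j => (v j : ℝ)) i| < δ i := by
  set δ' := Function.update δ i₀ (δ i₀ + ε)
  have hδδ' : ∀ i, δ i ≤ δ' i := by
    intro i
    rcases eq_or_ne i i₀ with rfl | hi
    · simpa [δ'] using hε.le
    · simp [δ', hi]
  have hprod' : |L.det| < ∏ i, δ' i :=
    hprod.trans_lt <| Finset.prod_lt_prod (fun i _ => hδ i) (fun i _ => hδδ' i)
      ⟨i₀, Finset.mem_univ _, by simpa [δ'] using hε⟩
  obtain ⟨v, hv0, hv⟩ :=
    exists_ne_zero_int_abs_mulVec_lt L hL (fun i => (hδ i).le.trans (hδδ' i)) hprod'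
  refine ⟨v, hv0, by simpa [δ'] using hv i₀, fun i hi => ?_⟩
  simpa [δ', hi] using hv i

end IntegerPoints

/-- Minkowski's theorem on linear forms: given d linear forms on ℝ^d with nonzero
determinant D and positive reals δ₁,…,δ_d with ∏ δᵢ = |D|, there is a nonzero
integer vector v with |L₁(v)| ≤ δ₁ and |Lᵢ(v)| < δᵢ for i ≥ 2. -/
theorem minkowski_linear_forms (d : ℕ) (hd : 0 < d)
    (L : Matrix (Fin d) (Fin d) ℝ) (hL : L.det ≠ 0)
    (δ : Fin d → ℝ) (hδ : ∀ i, 0 < δ i) (hprod : ∏ i, δ i = |L.det|) :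
    ∃ v : Fin d → ℤ, v ≠ 0 ∧
      |L.mulVec (fun j => (v j : ℝ)) ⟨0, hd⟩| ≤ δ ⟨0, hd⟩ ∧
      ∀ i : Fin d, i ≠ ⟨0, hd⟩ → |L.mulVec (fun j => (v j : ℝ)) i| < δ i := by
  set i₀ : Fin d := ⟨0, hd⟩
  set S := {v : Fin d → ℤ | v ≠ 0 ∧ |(L *ᵥ fun j => (v j : ℝ)) i₀| ≤ δ i₀ + 1 ∧
    ∀ i ≠ i₀, |(L *ᵥ fun j => (v j : ℝ)) i| < δ i}
  have hS : S.Finite := by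
    refine (finite_setOf_abs_mulVec_le L hL fun i => δ i + 1).subset fun v hv i => ?_
    rcases eq_or_ne i i₀ with rfl | hi
    · exact hv.2.1
    · linarith [hv.2.2 i hi]
  have h_approx : ∀ ε > 0, ∃ v ∈ S, |(L *ᵥ fun j => (v j : ℝ)) i₀| < δ i₀ + ε := by
    intro ε hε
    obtain ⟨v, hv0, hvi₀, hv⟩ :=
      exists_ne_zero_int_abs_mulVec_lt_add L hL hδ hprod.ge i₀ (lt_min hε one_pos)
    exact ⟨v, ⟨hv0, by linarith [min_le_right ε 1], hv⟩, by linarith [min_le_left ε 1]⟩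
  obtain ⟨v, ⟨hv0, -, hv⟩, hvi₀⟩ := hS.exists_le_of_forall_exists_lt_add _ h_approx
  exact ⟨v, hv0, hvi₀, hv⟩
end

section
/- For any irrational θ, there exist arbitrarily large values of t such that the system 0 < q < t, |θq - p| < 1/(2t) has no solution in integers p, q. -/
/-!
Call `Q ≥ 1` a record for `θ` if `‖Qθ‖ < ‖qθ‖` for all `0 < q < Q`, where `‖·‖` is the distance
to the nearest integer. Records exist beyond every bound:
irrationality makes `‖qθ‖` positive for `q ≥ 1`, and Dirichlet's theorem makes it arbitrarily small.
Take `t = Q`. If `0 < q < Q` and `x = qθ - p` satisfied `|x| < 1/(2Q)`, then with `y = Qθ - p'`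
the integer `Qp - qp' = qy - Qx` would have absolute value at most `q|y| + Q|x| < 2Q|x| < 1`,
hence vanish; but then `Q|x| = q|y| < Q|x|`.
-/

theorem one_div_two_mul_le_abs_mul_sub (θ : ℝ) {p p' q Q : ℤ} (hq : 0 < q) (hqQ : q < Q)
    (hrecord : |θ * Q - p'| < |θ * q - p|) : 1 / (2 * (Q : ℝ)) ≤ |θ * q - p| := by
  by_contra! hx
  set x := θ * q - p
  set y := θ * Q - p'
  have hq' : (0 : ℝ) < q := by exact_mod_cast hq
  have hqQ' : (q : ℝ) < Q := by exact_mod_cast hqQ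
  have hQ' : (0 : ℝ) < Q := hq'.trans hqQ'
  have hQx : (Q : ℝ) * |x| < 1 / 2 := by
    calc (Q : ℝ) * |x| < Q * (1 / (2 * Q)) := by gcongr
      _ = 1 / 2 := by field_simp [hQ'.ne']
  have hqy : (q : ℝ) * |y| < Q * |x| :=
    calc (q : ℝ) * |y| < q * |x| := by gcongr
      _ ≤ Q * |x| := by gcongr
  have hint : ((Q * p - q * p' : ℤ) : ℝ) = q * y - Q * x := by
    simp only [x, y]; push_cast; ring
  have hzero : Q * p - q * p' = 0 := by
    rw [← Int.abs_lt_one_iff, ← Int.cast_lt (R := ℝ), Int.cast_abs, Int.cast_one, hint]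
    calc |(q : ℝ) * y - Q * x| ≤ |(q : ℝ) * y| + |(Q : ℝ) * x| := abs_sub _ _
      _ = q * |y| + Q * |x| := by rw [abs_mul, abs_mul, abs_of_pos hq', abs_of_pos hQ']
      _ < 1 := by linarith
  have hqyQx : (q : ℝ) * y = Q * x := by
    rw [hzero, Int.cast_zero] at hint
    linarith
  have := congrArg abs hqyQx
  rw [abs_mul, abs_mul, abs_of_pos hq', abs_of_pos hQ'] at this
  linarith

theorem exists_record_abs_mul_sub_round (θ : ℝ) (hθ : Irrational θ) (N : ℕ) :
    ∃ Q : ℕ, N < Q ∧ ∀ q : ℕ, 0 < q → q < Q →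
      |θ * Q - round (θ * Q)| < |θ * q - round (θ * q)| := by
  set f : ℕ → ℝ := fun q => |θ * q - round (θ * q)|
  have hf_pos : ∀ q : ℕ, 0 < q → 0 < f q := fun q hq =>
    abs_pos.mpr (sub_ne_zero.mpr ((hθ.mul_natCast hq.ne').ne_int _))
  set δ := (Finset.Icc 1 (N + 1)).inf' ⟨1, by simp⟩ f
  have hδ : 0 < δ := (Finset.lt_inf'_iff _).mpr fun q hq => hf_pos q (Finset.mem_Icc.mp hq).1
  have hsmall : ∃ q : ℕ, 0 < q ∧ f q < δ := by
    obtain ⟨n, hn⟩ := exists_nat_gt (1 / δ)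
    have hn_pos : 0 < n := by exact_mod_cast (one_div_pos.mpr hδ).trans hn
    obtain ⟨k, hk, -, hk_le⟩ := Real.exists_nat_abs_mul_sub_round_le θ hn_pos
    refine ⟨k, hk, ?_⟩
    calc f k = |k * θ - round (k * θ)| := by simp only [f, mul_comm θ]
      _ ≤ 1 / (n + 1) := hk_le
      _ < 1 / n := one_div_lt_one_div_of_lt (by positivity) (lt_add_one _)
      _ < δ := (one_div_lt hδ (by positivity)).mp hn
  classical
  -- the first `q` with `f q < δ` beats every smaller `q`, and `δ` keeps it beyond `N + 1`
  obtain ⟨hQ, hQδ⟩ := Nat.find_spec hsmall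
  refine ⟨Nat.find hsmall, ?_, fun q hq hqQ => ?_⟩
  · by_contra! hle
    exact hQδ.not_ge (Finset.inf'_le f (Finset.mem_Icc.mpr ⟨hQ, by omega⟩))
  · exact hQδ.trans_le (not_lt.mp fun h => Nat.find_min hsmall hqQ ⟨hq, h⟩)

/-- For irrational θ there exist arbitrarily large t such that the system
0 < q < t, |θq - p| < 1/(2t) has no integer solutions. -/
theorem uniform_exponent_trivial (θ : ℝ) (hθ : Irrational θ) (T : ℝ) :
    ∃ t : ℝ, T < t ∧
      ¬ ∃ p q : ℤ, 0 < q ∧ (q : ℝ) < t ∧ |θ * (q : ℝ) - (p : ℝ)| < 1 / (2 * t) := by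
  obtain ⟨Q, hQ, hrecord⟩ := exists_record_abs_mul_sub_round θ hθ ⌈T⌉₊
  refine ⟨Q, (Nat.le_ceil T).trans_lt (by exact_mod_cast hQ), ?_⟩
  rintro ⟨p, q, hq, hqQ, hx⟩
  lift q to ℕ using hq.le
  have hqQ' : q < Q := by exact_mod_cast hqQ
  have hbetter : |θ * Q - round (θ * Q)| < |θ * q - p| :=
    (hrecord q (by exact_mod_cast hq) hqQ').trans_le (round_le _ p)
  have hlower := one_div_two_mul_le_abs_mul_sub θ (p' := round (θ * Q)) (Q := Q) hq
    (by exact_mod_cast hqQ') (by exact_mod_cast hbetter)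
  push_cast at hlower hx
  exact hlower.not_gt hx
end

section
/- For any Θ = (θ₁,…,θ_n) ∈ ℝⁿ, the Diophantine exponents satisfy (1 + ω(L_Θ))/(1 + ω(Θ)) ≥ n, where ω(Θ) is the regular exponent of simultaneous approximation and ω(L_Θ) is the regular exponent of the linear form L_Θ(x₁,…,x_n,y) = θ₁x₁ + … + θ_n x_n - y. -/
lemma dirichlet_box {n : ℕ} (hn : 0 < n) (α : Fin n → ℝ) (N : ℕ) (hN : 0 < N) :
    ∃ (x : Fin n → ℤ) (y : ℤ), x ≠ 0 ∧ (∀ i, |(x i : ℝ)| ≤ N) ∧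
      |∑ i, α i * (x i : ℝ) - (y : ℝ)| < 1 / (((N + 1) ^ n - 1 : ℕ) : ℝ) := by
  set K : ℕ := (N + 1) ^ n - 1 with hKdef
  have hpow : 2 ≤ (N + 1) ^ n := by
    calc 2 = 2 ^ 1 := rfl
    _ ≤ (N + 1) ^ 1 := Nat.pow_le_pow_left (by omega) 1
    _ ≤ (N + 1) ^ n := Nat.pow_le_pow_right (by omega) hn
  have hK : 0 < K := by omega
  have hKR : (0:ℝ) < (K:ℝ) := by exact_mod_cast hK
  set f : (Fin n → Fin (N + 1)) → ℝ := fun v => ∑ i, α i * ((v i : ℕ) : ℝ) with hf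
  have hmem : ∀ v, (⌊(K : ℝ) * Int.fract (f v)⌋).toNat < K := by
    intro v
    have h1 : (K : ℝ) * Int.fract (f v) < K := by
      have := Int.fract_lt_one (f v)
      nlinarith
    have h2 : ⌊(K : ℝ) * Int.fract (f v)⌋ < (K : ℤ) := by
      rw [Int.floor_lt]; exact_mod_cast h1
    omega
  set g : (Fin n → Fin (N + 1)) → Fin K := fun v => ⟨_, hmem v⟩ with hg
  have hcard : Fintype.card (Fin K) < Fintype.card (Fin n → Fin (N + 1)) := by
    simp only [Fintype.card_fin, Fintype.card_fun]
    omega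
  obtain ⟨v, w, hvw, hgeq⟩ := Fintype.exists_ne_map_eq_of_card_lt g hcard
  have hfloor : ⌊(K : ℝ) * Int.fract (f v)⌋ = ⌊(K : ℝ) * Int.fract (f w)⌋ := by
    have := congrArg (fun z : Fin K => (z : ℕ)) hgeq
    simp only [hg] at this
    have h1 : 0 ≤ ⌊(K : ℝ) * Int.fract (f v)⌋ :=
      Int.floor_nonneg.2 (mul_nonneg hKR.le (Int.fract_nonneg _))
    have h2 : 0 ≤ ⌊(K : ℝ) * Int.fract (f w)⌋ :=
      Int.floor_nonneg.2 (mul_nonneg hKR.le (Int.fract_nonneg _))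
    omega
  have hclose : |Int.fract (f v) - Int.fract (f w)| < 1 / K := by
    rw [abs_sub_lt_iff]
    have hv1 := Int.floor_le ((K : ℝ) * Int.fract (f v))
    have hv2 := Int.lt_floor_add_one ((K : ℝ) * Int.fract (f v))
    have hw1 := Int.floor_le ((K : ℝ) * Int.fract (f w))
    have hw2 := Int.lt_floor_add_one ((K : ℝ) * Int.fract (f w))
    rw [hfloor] at hv1 hv2
    constructor <;> [skip; skip] <;>
      · rw [sub_lt_iff_lt_add, div_add' _ _ _ hKR.ne', lt_div_iff₀ hKR]
        nlinarith
  refine ⟨fun i => (v i : ℤ) - (w i : ℤ), ⌊f v⌋ - ⌊f w⌋, ?_, ?_, ?_⟩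
  · intro h
    apply hvw
    funext i
    have := congrFun h i
    simp only [Pi.zero_apply, sub_eq_zero] at this
    exact Fin.ext (by exact_mod_cast this)
  · intro i
    simp only
    have h3 : |((v i : ℕ) : ℤ) - ((w i : ℕ) : ℤ)| ≤ (N : ℤ) := by
      have := (v i).isLt; have := (w i).isLt; rw [abs_le]; omega
    rw [← Int.cast_abs]
    exact_mod_cast h3
  · have hsum : ∑ i, α i * ((((v i : ℕ) : ℤ) - ((w i : ℕ) : ℤ) : ℤ) : ℝ) = f v - f w := by
      simp only [hf, ← Finset.sum_sub_distrib]
      congr 1; funext i; push_cast; ring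
    rw [hsum]
    have : f v - f w - ((⌊f v⌋ - ⌊f w⌋ : ℤ) : ℝ) = Int.fract (f v) - Int.fract (f w) := by
      unfold Int.fract; push_cast; ring
    rw [this]
    exact hclose


/-- Khintchine's transference theorem (1926): (1 + ω(L_Θ))/(1 + ω(Θ)) ≥ n,
equivalently ω(L_Θ) ≥ n·ω(Θ) + n - 1.  Since the sets of admissible exponents
are downward closed, this is expressed pointwise: if γ is an admissible regular
exponent for simultaneous approximation of Θ and δ < n·γ + n - 1, then δ is an
admissible regular exponent for the linear form L_Θ. -/
theorem khintchine_transference (n : ℕ) (hn : 0 < n) (θ : Fin n → ℝ) (γ δ : ℝ)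
    (hγ : ∀ t₀ : ℝ, ∃ t : ℝ, t₀ < t ∧ ∃ (x : ℤ) (y : Fin n → ℤ),
      x ≠ 0 ∧ |(x : ℝ)| ≤ t ∧ ∀ i, |θ i * (x : ℝ) - (y i : ℝ)| ≤ t ^ (-γ))
    (hδ : δ < (n : ℝ) * γ + (n : ℝ) - 1) :
    ∀ s₀ : ℝ, ∃ s : ℝ, s₀ < s ∧ ∃ (x : Fin n → ℤ) (y : ℤ),
      x ≠ 0 ∧ (∀ i, |(x i : ℝ)| ≤ s) ∧
      |∑ i, θ i * (x i : ℝ) - (y : ℝ)| ≤ s ^ (-δ) := by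
  intro s₀
  by_cases hcase : δ ≤ (n : ℝ)
  · -- Dirichlet case
    set N : ℕ := ⌈s₀⌉₊ + 1 with hNdef
    have hN : 0 < N := by omega
    have hs₀N : s₀ < (N : ℝ) := by
      have h := Nat.le_ceil s₀
      have h2 : ((⌈s₀⌉₊ : ℕ) : ℝ) < (N : ℝ) := by exact_mod_cast Nat.lt_succ_self _
      linarith
    obtain ⟨x, y, hx, hxb, hxy⟩ := dirichlet_box hn θ N hN
    refine ⟨N, hs₀N, x, y, hx, hxb, ?_⟩
    have hN1 : (1:ℝ) ≤ N := by exact_mod_cast hN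
    have hKge : (N : ℝ) ^ δ ≤ (((N + 1) ^ n - 1 : ℕ) : ℝ) := by
      have h1 : (N:ℝ) ^ δ ≤ (N:ℝ) ^ (n:ℝ) := Real.rpow_le_rpow_of_exponent_le hN1 hcase
      have h2 : (N:ℝ) ^ (n:ℝ) = ((N ^ n : ℕ) : ℝ) := by rw [Real.rpow_natCast]; push_cast; ring
      have h3 : (N ^ n : ℕ) ≤ (N + 1) ^ n - 1 := by
        have h4 : N ^ n < (N + 1) ^ n := Nat.pow_lt_pow_left (by omega) hn.ne'
        omega
      have h3' : ((N ^ n : ℕ) : ℝ) ≤ (((N + 1) ^ n - 1 : ℕ) : ℝ) := by exact_mod_cast h3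
      linarith
    have hpos : (0:ℝ) < (N:ℝ) ^ δ := Real.rpow_pos_of_pos (by linarith) δ
    have hfin : 1 / (((N + 1) ^ n - 1 : ℕ) : ℝ) ≤ (N:ℝ) ^ (-δ) := by
      rw [Real.rpow_neg (by linarith : (0:ℝ) ≤ (N:ℝ)), ← one_div]
      exact one_div_le_one_div_of_le hpos hKge
    linarith
  · -- transference case
    push_neg at hcase
    have hn' : (0:ℝ) < (n:ℝ) := by exact_mod_cast hn
    have hδ0 : (0:ℝ) < δ := lt_trans hn' hcase
    set c : ℝ := (n:ℝ)⁻¹ with hc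
    have hcpos : 0 < c := by positivity
    have hcn : c * (n:ℝ) = 1 := inv_mul_cancel₀ hn'.ne'
    set a : ℝ := c * δ + c - 1 with ha
    have hapos : 0 ≤ a := by nlinarith
    set η : ℝ := γ - a with hη
    have hηpos : 0 < η := by nlinarith [mul_lt_mul_of_pos_left hδ hcpos]
    set S : ℝ := max s₀ 0 + 1 with hS
    have hS1 : (1:ℝ) ≤ S := by
      have := le_max_right s₀ (0:ℝ); rw [hS]; linarith
    have hSs₀ : s₀ < S := by
      have := le_max_left s₀ (0:ℝ); rw [hS]; linarith
    set C₁ : ℝ := (2 * S) ^ δ * (2 * (n:ℝ)) with hC₁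
    have hC₁pos : 0 < C₁ := by
      apply mul_pos (Real.rpow_pos_of_pos (by linarith) δ) (by linarith)
    obtain ⟨t, htT, q, p, hq0, hqt, hqp⟩ := hγ (max 1 (C₁ ^ η⁻¹))
    have ht1 : 1 < t := lt_of_le_of_lt (le_max_left _ _) htT
    have htpos : (0:ℝ) < t := by linarith
    set Q : ℕ := q.natAbs with hQdef
    have hQ1 : 1 ≤ Q := by
      have : q.natAbs ≠ 0 := fun h => hq0 (Int.natAbs_eq_zero.1 h)
      omega
    set Qr : ℝ := (Q : ℝ) with hQr
    have hQr1 : (1:ℝ) ≤ Qr := by rw [hQr]; exact_mod_cast hQ1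
    have hQrpos : (0:ℝ) < Qr := by linarith
    have hQt : Qr ≤ t := by
      have h1 : Qr = |(q:ℝ)| := by
        rw [hQr, hQdef]; push_cast [Nat.cast_natAbs]; ring
      rw [h1]; exact hqt
    set p' : Fin n → ℤ := fun i => if 0 ≤ q then p i else -p i with hp'def
    have hp' : ∀ i, |θ i * Qr - (p' i : ℝ)| ≤ t ^ (-γ) := by
      intro i
      rcases le_or_gt 0 q with hq | hq
      · have hQq : Qr = (q:ℝ) := by
          rw [hQr, hQdef, Nat.cast_natAbs]; exact_mod_cast abs_of_nonneg hq
        simp only [hp'def, if_pos hq, hQq]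
        exact hqp i
      · have hQq : Qr = -(q:ℝ) := by
          rw [hQr, hQdef, Nat.cast_natAbs]; exact_mod_cast abs_of_neg hq
        simp only [hp'def, if_neg (not_le.2 hq), hQq]
        rw [show θ i * -(q:ℝ) - ((-p i : ℤ) : ℝ) = -(θ i * (q:ℝ) - (p i : ℝ)) by push_cast; ring,
          abs_neg]
        exact hqp i
    -- the box size
    set N : ℕ := ⌈Qr ^ c⌉₊ with hNdef
    have hQc1 : (1:ℝ) ≤ Qr ^ c := Real.one_le_rpow hQr1 hcpos.le
    have hN1 : 1 ≤ N := Nat.one_le_ceil_iff.2 (by linarith)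
    have hNc : Qr ^ c ≤ (N:ℝ) := Nat.le_ceil _
    have hNR1 : (1:ℝ) ≤ (N:ℝ) := by exact_mod_cast hN1
    have hNup : (N:ℝ) ≤ 2 * Qr ^ c := by
      have := Nat.ceil_lt_add_one (by positivity : (0:ℝ) ≤ Qr ^ c)
      rw [← hNdef] at this
      linarith
    have hQN : Q ≤ (N + 1) ^ n - 1 := by
      have h1 : Qr ≤ ((N ^ n : ℕ) : ℝ) := by
        have e1 : (Qr ^ c) ^ (n:ℕ) = Qr := by
          rw [← Real.rpow_natCast (Qr ^ c) n, ← Real.rpow_mul hQrpos.le, hcn, Real.rpow_one]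
        calc Qr = (Qr ^ c) ^ (n:ℕ) := e1.symm
        _ ≤ (N:ℝ) ^ (n:ℕ) := pow_le_pow_left₀ (by positivity) hNc n
        _ = ((N ^ n : ℕ) : ℝ) := by push_cast; ring
      have h2 : Q ≤ N ^ n := by rw [hQr] at h1; exact_mod_cast h1
      have h3 : N ^ n < (N + 1) ^ n := Nat.pow_lt_pow_left (by omega) hn.ne'
      omega
    set K : ℕ := (N + 1) ^ n - 1 with hK
    have hKpos : 0 < K := by omega
    have hKr : Qr ≤ (K : ℝ) := by rw [hQr]; exact_mod_cast hQN
    obtain ⟨x, y, hx, hxb, hxy⟩ := dirichlet_box hn (fun i => (p' i : ℝ) / Qr) N (by omega)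
    rw [← hK] at hxy
    -- exact divisibility
    set Z : ℤ := (∑ i, p' i * x i) - (Q : ℤ) * y with hZ
    have hZr : (Z : ℝ) = Qr * ((∑ i, (p' i : ℝ) / Qr * (x i : ℝ)) - (y : ℝ)) := by
      rw [hZ, mul_sub, Finset.mul_sum]
      push_cast
      congr 1
      exact Finset.sum_congr rfl fun i _ => by field_simp
    have hZ0 : Z = 0 := by
      have h1 : |(Z:ℝ)| < 1 := by
        rw [hZr, abs_mul, abs_of_pos hQrpos]
        calc Qr * |(∑ i, (p' i : ℝ) / Qr * (x i : ℝ)) - (y : ℝ)| < Qr * (1 / (K:ℝ)) :=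
            mul_lt_mul_of_pos_left hxy hQrpos
        _ ≤ 1 := by
            rw [mul_one_div]
            exact div_le_one_of_le₀ hKr (by positivity)
      have h2 : |Z| < 1 := by exact_mod_cast (by rwa [← Int.cast_abs] at h1 : ((|Z|:ℤ):ℝ) < 1)
      exact Int.abs_lt_one_iff.mp h2
    have hsum0 : (∑ i, (p' i : ℝ) / Qr * (x i : ℝ)) - (y : ℝ) = 0 := by
      have := hZr
      rw [hZ0] at this
      simpa [hQrpos.ne'] using this.symm
    -- linear form bound
    have hL : |∑ i, θ i * (x i : ℝ) - (y : ℝ)| ≤ (n:ℝ) * (N:ℝ) * t ^ (-γ) / Qr := by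
      have hkey : ∑ i, θ i * (x i : ℝ) - (y : ℝ) = ∑ i, (θ i - (p' i : ℝ) / Qr) * (x i : ℝ) := by
        have e1 : ∑ i, (θ i - (p' i : ℝ) / Qr) * (x i : ℝ)
            = (∑ i, θ i * (x i : ℝ)) - ∑ i, (p' i : ℝ) / Qr * (x i : ℝ) := by
          rw [← Finset.sum_sub_distrib]
          exact Finset.sum_congr rfl fun i _ => by ring
        rw [e1]
        linarith [hsum0]
      rw [hkey]
      calc |∑ i, (θ i - (p' i : ℝ) / Qr) * (x i : ℝ)| ≤ ∑ i, |(θ i - (p' i : ℝ) / Qr) * (x i : ℝ)| :=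
          Finset.abs_sum_le_sum_abs _ _
      _ ≤ ∑ _i : Fin n, t ^ (-γ) / Qr * (N:ℝ) := by
          apply Finset.sum_le_sum
          intro i _
          rw [abs_mul]
          apply mul_le_mul _ (hxb i) (abs_nonneg _) (by positivity)
          have e2 : θ i - (p' i : ℝ) / Qr = (θ i * Qr - (p' i : ℝ)) / Qr := by field_simp
          rw [e2, abs_div, abs_of_pos hQrpos]
          exact (div_le_div_iff_of_pos_right hQrpos).2 (hp' i)
      _ = (n:ℝ) * (N:ℝ) * t ^ (-γ) / Qr := by
          rw [Finset.sum_const, Finset.card_univ, Fintype.card_fin, nsmul_eq_mul]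
          ring
    -- choose s
    refine ⟨max S (N:ℝ), lt_of_lt_of_le hSs₀ (le_max_left _ _), x, y, hx, ?_, ?_⟩
    · intro i
      exact (hxb i).trans (le_max_right _ _)
    set s : ℝ := max S (N:ℝ) with hs
    have hs1 : (1:ℝ) ≤ s := le_trans hS1 (le_max_left _ _)
    have hspos : (0:ℝ) < s := by linarith
    have hsδpos : (0:ℝ) < s ^ δ := Real.rpow_pos_of_pos hspos δ
    have hsδ : s ^ δ ≤ (2 * S) ^ δ * Qr ^ (c * δ) := by
      have h1 : s ≤ 2 * S * Qr ^ c := by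
        have h2 : s ≤ S * (N:ℝ) :=
          max_le (le_mul_of_one_le_right (by linarith) hNR1)
                 (le_mul_of_one_le_left (by positivity) hS1)
        calc s ≤ S * (N:ℝ) := h2
        _ ≤ S * (2 * Qr ^ c) := mul_le_mul_of_nonneg_left hNup (by linarith)
        _ = 2 * S * Qr ^ c := by ring
      calc s ^ δ ≤ (2 * S * Qr ^ c) ^ δ := Real.rpow_le_rpow hspos.le h1 hδ0.le
      _ = (2 * S) ^ δ * (Qr ^ c) ^ δ := Real.mul_rpow (by linarith) (by positivity)
      _ = (2 * S) ^ δ * Qr ^ (c * δ) := by rw [← Real.rpow_mul hQrpos.le]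
    have hmain : s ^ δ * |∑ i, θ i * (x i : ℝ) - (y : ℝ)| ≤ 1 := by
      have step1 : s ^ δ * |∑ i, θ i * (x i : ℝ) - (y : ℝ)|
          ≤ ((2 * S) ^ δ * Qr ^ (c * δ)) * ((n:ℝ) * (2 * Qr ^ c) * t ^ (-γ) / Qr) := by
        have ht0 : (0:ℝ) ≤ t ^ (-γ) := Real.rpow_nonneg htpos.le _
        have hb0 : (0:ℝ) ≤ (2 * S) ^ δ * Qr ^ (c * δ) :=
          mul_nonneg (Real.rpow_nonneg (by linarith) _) (Real.rpow_nonneg hQrpos.le _)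
        have hL2 : ((n:ℝ) * (N:ℝ) * t ^ (-γ) / Qr) ≤ ((n:ℝ) * (2 * Qr ^ c) * t ^ (-γ) / Qr) := by
          apply (div_le_div_iff_of_pos_right hQrpos).2
          exact mul_le_mul_of_nonneg_right (mul_le_mul_of_nonneg_left hNup hn'.le) ht0
        exact mul_le_mul hsδ (hL.trans hL2) (abs_nonneg _) hb0
      have step2 : ((2 * S) ^ δ * Qr ^ (c * δ)) * ((n:ℝ) * (2 * Qr ^ c) * t ^ (-γ) / Qr)
          = C₁ * (Qr ^ (c * δ) * Qr ^ c * Qr⁻¹ * t ^ (-γ)) := by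
        rw [hC₁, div_eq_mul_inv]; ring
      have step3 : Qr ^ (c * δ) * Qr ^ c * Qr⁻¹ = Qr ^ a := by
        have e : c * δ + c + -1 = a := by rw [ha]; ring
        rw [← Real.rpow_neg_one Qr, ← Real.rpow_add hQrpos, ← Real.rpow_add hQrpos, e]
      have step4 : Qr ^ a * t ^ (-γ) ≤ t ^ (-η) := by
        calc Qr ^ a * t ^ (-γ) ≤ t ^ a * t ^ (-γ) :=
            mul_le_mul_of_nonneg_right (Real.rpow_le_rpow hQrpos.le hQt hapos)
              (Real.rpow_nonneg htpos.le _)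
        _ = t ^ (-η) := by rw [← Real.rpow_add htpos]; congr 1; rw [hη]; ring
      have step5 : C₁ * t ^ (-η) ≤ 1 := by
        have h1 : C₁ ^ η⁻¹ < t := lt_of_le_of_lt (le_max_right _ _) htT
        have h2 : C₁ ≤ t ^ η := by
          calc C₁ = (C₁ ^ η⁻¹) ^ η := by
                  rw [← Real.rpow_mul hC₁pos.le, inv_mul_cancel₀ hηpos.ne', Real.rpow_one]
          _ ≤ t ^ η := Real.rpow_le_rpow (Real.rpow_nonneg hC₁pos.le _) h1.le hηpos.le
        rw [Real.rpow_neg htpos.le, ← div_eq_mul_inv]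
        exact div_le_one_of_le₀ h2 (Real.rpow_nonneg htpos.le _)
      calc s ^ δ * |∑ i, θ i * (x i : ℝ) - (y : ℝ)|
          ≤ C₁ * (Qr ^ (c * δ) * Qr ^ c * Qr⁻¹ * t ^ (-γ)) := by rw [← step2]; exact step1
      _ = C₁ * (Qr ^ a * t ^ (-γ)) := by rw [step3]
      _ ≤ C₁ * t ^ (-η) := mul_le_mul_of_nonneg_left step4 hC₁pos.le
      _ ≤ 1 := step5
    rw [Real.rpow_neg hspos.le, ← one_div, le_div_iff₀ hsδpos]
    linarith [hmain, mul_comm (s ^ δ) (abs (∑ i, θ i * (x i : ℝ) - (y : ℝ)))]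
end

section
/- Let Λ be a full rank lattice in ℝ^d with determinant 1, let L be a k-dimensional linear subspace of ℝ^d such that Γ = L ∩ Λ is a lattice of rank k. Then Γ^⊥ = L^⊥ ∩ Λ* is a lattice of rank d - k, and det Γ^⊥ = det Γ. -/
/-!
Pull `Γ` back to `G = {y ∈ ℤ^d : A y ∈ L}`. The quotient `ℤ^d / G` embeds into `ℝ^d / L`, so it is
torsion-free, hence free, and the basis of `G` coming from `v` extends to a basis `(b_p)` of
`ℤ^d`. The vectors `A b_p` form a basis of `Λ` starting with `v`; its dual basis for the dot
product is a basis of `Λ*`, and its last `d - k` vectors form a basis `w` of `L^⊥ ∩ Λ*`.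
If `P` is the Gram matrix of `(A b_p)`, then `P⁻¹` is the Gram matrix of the dual basis,
`det P = (det A)² = 1`, and Jacobi's complementary minor identity
`det P · det (P⁻¹)₂₂ = det P₁₁` gives `det Gram(w) = det Gram(v)`.
-/

open Module
open Matrix hiding gram

theorem Submodule.exists_basis_sum_inl_eq {R M ι κ : Type*} [CommRing R] [IsDomain R]
    [IsPrincipalIdealRing R] [AddCommGroup M] [Module R M] [Module.Finite R M]
    [Fintype ι] [Fintype κ] (N : Submodule R M) [IsTorsionFree R (M ⧸ N)] (bN : Basis ι R N)
    (hcard : Fintype.card ι + Fintype.card κ = finrank R M) :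
    ∃ b : Basis (ι ⊕ κ) R M, ∀ i, b (.inl i) = bN i := by
  obtain ⟨s, hs⟩ := N.mkQ.exists_rightInverse_of_surjective N.range_mkQ
  let e := (LinearMap.exact_subtype_mkQ N).splitSurjectiveEquiv N.injective_subtype ⟨s, hs⟩
  let b₀ := (bN.prod (finBasis R (M ⧸ N))).map e.1.symm
  have hκ : Fintype.card κ = finrank R (M ⧸ N) := by
    have := finrank_eq_card_basis b₀
    simp only [Fintype.card_sum, Fintype.card_fin] at this
    omega
  refine ⟨b₀.reindex (.sumCongr (.refl ι) (Fintype.equivFinOfCardEq hκ).symm), fun i => ?_⟩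
  simpa [b₀] using (LinearMap.congr_fun e.2.1 (bN i)).symm

theorem Submodule.isTorsionFree_quotient_comap {K M V : Type*} [Field K] [CharZero K]
    [AddCommGroup M] [AddCommGroup V] [Module K V] (f : M →ₗ[ℤ] V) (L : Submodule K V) :
    IsTorsionFree ℤ (M ⧸ (L.restrictScalars ℤ).comap f) := by
  refine .of_smul_eq_zero fun n q hnq => or_iff_not_imp_left.2 fun hn => ?_
  induction q using Submodule.Quotient.induction_on with | _ x
  rw [← Submodule.Quotient.mk_smul, Submodule.Quotient.mk_eq_zero] at hnq
  rw [Submodule.Quotient.mk_eq_zero]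
  have : (n : K) • f x ∈ L := by simpa [Int.cast_smul_eq_zsmul] using hnq
  simpa [hn] using L.smul_mem (n : K)⁻¹ this

theorem exists_basis_comap_of_existsUnique {K M V ι : Type*} [Ring K] [AddCommGroup M]
    [AddCommGroup V] [Module K V] [Fintype ι] {f : M →ₗ[ℤ] V} (hf : Function.Injective f)
    {L : Submodule K V} {m : ι → M} (hmL : ∀ i, f (m i) ∈ L)
    (huniq : ∀ x, (∃ y, x = f y) → x ∈ L → ∃! c : ι → ℤ, x = ∑ i, (c i : K) • f (m i)) :
    ∃ b : Basis ι ℤ ((L.restrictScalars ℤ).comap f), ∀ i, (b i : M) = m i := by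
  let mG : ι → (L.restrictScalars ℤ).comap f := fun i => ⟨m i, hmL i⟩
  have hcoords : ∀ (y : (L.restrictScalars ℤ).comap f) (c : ι → ℤ),
      Fintype.linearCombination ℤ mG c = y ↔ f y = ∑ i, (c i : K) • f (m i) := by
    intro y c
    rw [← Subtype.coe_inj, ← hf.eq_iff, eq_comm]
    simp [Fintype.linearCombination_apply, mG, map_sum, Int.cast_smul_eq_zsmul]
  have hbij : Function.Bijective (Fintype.linearCombination ℤ mG) :=
    (Function.bijective_iff_existsUnique _).2 fun y => by
      simpa only [hcoords] using huniq (f y) ⟨y, rfl⟩ y.2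
  exact ⟨.mk (linearIndependent_iff_injective_fintypeLinearCombination.2 hbij.1)
    ((span_range_eq_top_iff_surjective_fintypeLinearCombination ℤ mG).2 hbij.2).ge,
    fun i => by simp [mG]⟩

theorem exists_basis_extending_sublattice_basis {K M V ι κ : Type*} [Field K] [CharZero K]
    [AddCommGroup M] [Module.Finite ℤ M] [AddCommGroup V] [Module K V] [Fintype ι] [Fintype κ]
    {f : M →ₗ[ℤ] V} (hf : Function.Injective f) {L : Submodule K V} {v : ι → V}
    (hvf : ∀ i, ∃ y, v i = f y) (hvL : ∀ i, v i ∈ L)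
    (huniq : ∀ x, (∃ y, x = f y) → x ∈ L → ∃! c : ι → ℤ, x = ∑ i, (c i : K) • v i)
    (hcard : Fintype.card ι + Fintype.card κ = finrank ℤ M) :
    ∃ b : Basis (ι ⊕ κ) ℤ M, ∀ i, f (b (.inl i)) = v i := by
  choose m hm using hvf
  obtain ⟨bG, hbG⟩ := exists_basis_comap_of_existsUnique hf (m := m) (fun i => hm i ▸ hvL i)
    (by simpa only [← hm] using huniq)
  have := Submodule.isTorsionFree_quotient_comap f L
  obtain ⟨b, hb⟩ := ((L.restrictScalars ℤ).comap f).exists_basis_sum_inl_eq bG hcard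
  exact ⟨b, fun i => by rw [hb, hbG, hm]⟩

/-- A case of Jacobi's identity for complementary minors of a matrix and its inverse. -/
theorem Matrix.det_mul_det_toBlocks₂₂_of_mul_eq_one {R m n : Type*} [CommRing R] [Fintype m]
    [DecidableEq m] [Fintype n] [DecidableEq n] {P Q : Matrix (m ⊕ n) (m ⊕ n) R}
    (h : P * Q = 1) : P.det * Q.toBlocks₂₂.det = P.toBlocks₁₁.det := by
  have hblocks : P * fromBlocks 1 Q.toBlocks₁₂ 0 Q.toBlocks₂₂ =
      fromBlocks P.toBlocks₁₁ 0 P.toBlocks₂₁ 1 := by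
    rw [← fromBlocks_toBlocks P, ← fromBlocks_toBlocks Q, fromBlocks_multiply, ← fromBlocks_one,
      fromBlocks_inj] at h
    rw [← fromBlocks_toBlocks P, fromBlocks_multiply]
    simp [h.2.1, h.2.2.2]
  simpa [det_fromBlocks_zero₂₁, det_fromBlocks_zero₁₂] using congrArg det hblocks

def gram {ι n R : Type*} [Fintype n] [Mul R] [AddCommMonoid R] (u : ι → n → R) : Matrix ι ι R :=
  of fun i j => u i ⬝ᵥ u j

theorem gram_eq_mul_transpose {ι n R : Type*} [Fintype n] [CommSemiring R] (u : ι → n → R) :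
    gram u = of u * (of u)ᵀ := rfl

/-- The map `y ↦ A y`, whose image is the lattice `Λ = A ℤⁿ`. -/
noncomputable def Matrix.latticeMap {m n : Type*} [Fintype n] (A : Matrix m n ℝ) :
    (n → ℤ) →ₗ[ℤ] m → ℝ :=
  (A.mulVecLin.restrictScalars ℤ).comp ((Int.castAddHom ℝ).toIntLinearMap.compLeft n)

theorem Matrix.latticeMap_apply {m n : Type*} [Fintype n] (A : Matrix m n ℝ) (y : n → ℤ) :
    A.latticeMap y = A *ᵥ fun j => (y j : ℝ) := rfl

theorem Matrix.latticeMap_injective {n : Type*} [Fintype n] [DecidableEq n] {A : Matrix n n ℝ}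
    (hA : A.det ≠ 0) : Function.Injective A.latticeMap :=
  (mulVec_injective_iff_isUnit.2 (A.isUnit_iff_isUnit_det.2 hA.isUnit)).comp
    fun _ _ h => funext fun j => Int.cast_injective (congrFun h j)

theorem isUnit_det_of_basis {n R : Type*} [Fintype n] [DecidableEq n] [CommRing R]
    (b : Basis n R (n → R)) : IsUnit (of fun p => b p).det := by
  have := (Pi.basisFun R n).isUnit_det b
  rwa [Pi.basisFun_det] at this

theorem det_of_latticeMap_basis {n : Type*} [Fintype n] [DecidableEq n] (A : Matrix n n ℝ)
    (b : Basis n ℤ (n → ℤ)) :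
    (of fun p => A.latticeMap (b p)).det = ((of fun p => b p).det : ℝ) * A.det := by
  have : (of fun p => A.latticeMap (b p)) = (of fun p => b p).map (Int.castRingHom ℝ) * Aᵀ := by
    ext p s
    simp [latticeMap_apply, mulVec, dotProduct, mul_apply, mul_comm]
  rw [this, det_mul, det_transpose]
  exact congrArg (· * A.det) (RingHom.map_det (Int.castRingHom ℝ) _).symm

section LatticeBasis

variable {ι n : Type*} [Fintype ι] [Fintype n] [DecidableEq n]

theorem det_gram_latticeMap_basis [DecidableEq ι] (A : Matrix n n ℝ) (b : Basis ι ℤ (n → ℤ)) :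
    (gram fun p => A.latticeMap (b p)).det = A.det ^ 2 := by
  let σ := b.indexEquiv (Pi.basisFun ℤ n)
  have hgram : (gram fun p => A.latticeMap (b p)).submatrix σ.symm σ.symm =
      gram fun q => A.latticeMap (b.reindex σ q) := by
    ext; simp [gram]
  rw [← det_submatrix_equiv_self σ.symm, hgram, gram_eq_mul_transpose, det_mul, det_transpose,
    det_of_latticeMap_basis, ← sq, mul_pow, ← Int.cast_pow,
    Int.isUnit_sq (isUnit_det_of_basis _), Int.cast_one, one_mul]

theorem exists_basis_latticeMap {A : Matrix n n ℝ} (hA : A.det ≠ 0) (b : Basis ι ℤ (n → ℤ)) :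
    ∃ bR : Basis ι ℝ (n → ℝ), ∀ p, bR p = A.latticeMap (b p) := by
  let σ := b.indexEquiv (Pi.basisFun ℤ n)
  have hdet : (of fun q => A.latticeMap (b.reindex σ q)).det ≠ 0 := by
    rw [det_of_latticeMap_basis]
    exact mul_ne_zero (by exact_mod_cast (isUnit_det_of_basis _).ne_zero) hA
  have hli : LinearIndependent ℝ fun p => A.latticeMap (b p) := by
    have hrows : LinearIndependent ℝ fun q => A.latticeMap (b.reindex σ q) :=
      linearIndependent_rows_of_det_ne_zero hdet
    simpa [Function.comp_def] using hrows.comp σ σ.injective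
  exact ⟨basisOfLinearIndependentOfCardEqFinrank' _ hli (by simp [Fintype.card_congr σ]),
    fun p => by simp⟩

end LatticeBasis

section DotProductDual

variable {K n ι : Type*} [Field K] [Fintype n] [Fintype ι] [DecidableEq ι]

theorem dotProductBilin_nondegenerate :
    (dotProductBilin K K : LinearMap.BilinForm K (n → K)).Nondegenerate := by
  classical
  refine LinearMap.BilinForm.Nondegenerate.ofSeparatingLeft fun x hx => funext fun i => ?_
  simpa using hx (Pi.single i 1)

noncomputable def Module.Basis.dotProductDual (b : Basis ι K (n → K)) : Basis ι K (n → K) :=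
  LinearMap.BilinForm.dualBasis (dotProductBilin K K) dotProductBilin_nondegenerate b

variable (b : Basis ι K (n → K))

theorem Module.Basis.dotProductDual_repr_apply (x : n → K) (p : ι) :
    b.dotProductDual.repr x p = x ⬝ᵥ b p :=
  LinearMap.BilinForm.dualBasis_repr_apply dotProductBilin_nondegenerate b x p

theorem Module.Basis.dotProductDual_dotProduct (p q : ι) :
    b.dotProductDual p ⬝ᵥ b q = if q = p then 1 else 0 :=
  LinearMap.BilinForm.apply_dualBasis_left dotProductBilin_nondegenerate b p q

theorem Module.Basis.sum_dotProduct_smul_dotProductDual (x : n → K) :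
    ∑ p, (x ⬝ᵥ b p) • b.dotProductDual p = x := by
  simpa only [dotProductDual_repr_apply] using b.dotProductDual.sum_repr x

theorem Module.Basis.gram_mul_gram_dotProductDual : gram b * gram b.dotProductDual = 1 := by
  ext p r
  have hexp := congrArg (· ⬝ᵥ b.dotProductDual r) (b.sum_dotProduct_smul_dotProductDual (b p))
  simp only [sum_dotProduct, smul_dotProduct, smul_eq_mul] at hexp
  rw [mul_apply, one_apply, ← b.dotProductDual_dotProduct r p, dotProduct_comm, ← hexp]
  rfl

end DotProductDual

section DualLattice

variable {K M n ι κ : Type*} [Field K] [AddCommGroup M] [Fintype n] [Fintype ι]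
  [DecidableEq ι] [Fintype κ] [DecidableEq κ]

theorem Module.Basis.dotProductDual_dotProduct_eq_repr (b : Basis ι K (n → K))
    {f : M →ₗ[ℤ] n → K} {bZ : Basis ι ℤ M} (hb : ∀ p, b p = f (bZ p)) (p : ι) (y : M) :
    b.dotProductDual p ⬝ᵥ f y = bZ.repr y p := by
  have hfy : f y = ∑ q, (bZ.repr y q : K) • b q := by
    conv_lhs => rw [← bZ.sum_repr y]
    simp only [map_sum, map_zsmul, hb, Int.cast_smul_eq_zsmul]
  simp [hfy, dotProduct_sum, dotProductDual_dotProduct]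

variable (b : Basis (ι ⊕ κ) K (n → K))

theorem Module.Basis.dotProductDual_inr_dotProduct_eq_zero (j : κ) {u : n → K}
    (hu : u ∈ Submodule.span K (Set.range (b ∘ Sum.inl))) :
    b.dotProductDual (.inr j) ⬝ᵥ u = 0 := by
  have : Submodule.span K (Set.range (b ∘ Sum.inl)) ≤
      LinearMap.ker (dotProductBilin K K (b.dotProductDual (.inr j))) :=
    Submodule.span_le.2 <| by rintro _ ⟨i, rfl⟩; simp [dotProductDual_dotProduct]
  simpa using this hu

theorem Module.Basis.eq_sum_smul_dotProductDual_inr_iff {x : n → K}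
    (hx : ∀ i, x ⬝ᵥ b (.inl i) = 0) (c : κ → K) :
    x = ∑ j, c j • b.dotProductDual (.inr j) ↔ ∀ j, c j = x ⬝ᵥ b (.inr j) := by
  constructor
  · rintro rfl j
    simp [sum_dotProduct, dotProductDual_dotProduct]
  · intro hc
    conv_lhs => rw [← b.sum_dotProduct_smul_dotProductDual x]
    simp [Fintype.sum_sum_type, hx, hc]

theorem Module.Basis.existsUnique_eq_sum_intCast_smul_dotProductDual_inr [CharZero K]
    {f : M →ₗ[ℤ] n → K} {bZ : Basis (ι ⊕ κ) ℤ M} (hb : ∀ p, b p = f (bZ p)) {x : n → K}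
    (hint : ∀ y, ∃ z : ℤ, x ⬝ᵥ f y = z) (hx : ∀ i, x ⬝ᵥ b (.inl i) = 0) :
    ∃! c : κ → ℤ, x = ∑ j, (c j : K) • b.dotProductDual (.inr j) := by
  choose z hz using fun j => hint (bZ (.inr j))
  simp only [b.eq_sum_smul_dotProductDual_inr_iff hx, hb, hz]
  exact ⟨z, fun _ => rfl, fun c hc => funext fun j => Int.cast_injective (hc j)⟩

theorem Module.Basis.det_gram_inl_eq_det_gram_dotProductDual_inr (hb : (gram b).det = 1) :
    (gram (b ∘ Sum.inl)).det = (gram (b.dotProductDual ∘ Sum.inr)).det := by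
  have := det_mul_det_toBlocks₂₂_of_mul_eq_one b.gram_mul_gram_dotProductDual
  rw [hb, one_mul] at this
  exact this.symm

end DualLattice

/-- Let Λ = AℤΔ be a full rank lattice in ℝ^d of determinant 1, L a k-dimensional
subspace such that Γ = L ∩ Λ is a lattice of rank k (with ℤ-basis v).  Then
Γ^⊥ = L^⊥ ∩ Λ* is a lattice of rank d - k (it has a ℤ-basis w), and
det Γ^⊥ = det Γ (expressed as the equality of the Gram determinants of the two
bases). -/
theorem orthogonal_sublattices (d k : ℕ) (hk : k ≤ d)
    (A : Matrix (Fin d) (Fin d) ℝ) (hA : A.det = 1)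
    (L : Submodule ℝ (Fin d → ℝ)) (hL : Module.finrank ℝ L = k)
    (v : Fin k → (Fin d → ℝ))
    (hvL : ∀ i, v i ∈ L)
    (hvΛ : ∀ i, ∃ m : Fin d → ℤ, v i = A.mulVec (fun j => (m j : ℝ)))
    (hvbasis : ∀ x : Fin d → ℝ,
      (∃ m : Fin d → ℤ, x = A.mulVec (fun j => (m j : ℝ))) → x ∈ L →
      ∃! c : Fin k → ℤ, x = ∑ i, (c i : ℝ) • v i) :
    ∃ w : Fin (d - k) → (Fin d → ℝ),
      (∀ j, ∀ u ∈ L, ∑ s, w j s * u s = 0) ∧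
      (∀ j, ∀ m : Fin d → ℤ, ∃ z : ℤ,
        ∑ s, w j s * A.mulVec (fun i => (m i : ℝ)) s = (z : ℝ)) ∧
      (∀ x : Fin d → ℝ,
        (∀ m : Fin d → ℤ, ∃ z : ℤ,
          ∑ s, x s * A.mulVec (fun i => (m i : ℝ)) s = (z : ℝ)) →
        (∀ u ∈ L, ∑ s, x s * u s = 0) →
        ∃! c : Fin (d - k) → ℤ, x = ∑ j, (c j : ℝ) • w j) ∧
      Matrix.det (Matrix.of fun i i' => ∑ s, v i s * v i' s) =
        Matrix.det (Matrix.of fun j j' => ∑ s, w j s * w j' s) := by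
  have hAdet : A.det ≠ 0 := hA ▸ one_ne_zero
  obtain ⟨bZ, hbZ⟩ : ∃ bZ : Basis (Fin k ⊕ Fin (d - k)) ℤ (Fin d → ℤ),
      ∀ i, A.latticeMap (bZ (.inl i)) = v i :=
    exists_basis_extending_sublattice_basis (latticeMap_injective hAdet) hvΛ hvL hvbasis
      (by simp only [Fintype.card_fin, finrank_fin_fun]; omega)
  obtain ⟨b, hb⟩ := exists_basis_latticeMap hAdet bZ
  have hbv : ∀ i, b (.inl i) = v i := fun i => (hb _).trans (hbZ i)
  have hLv : Submodule.span ℝ (Set.range (b ∘ Sum.inl)) = L := by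
    refine Submodule.eq_of_le_of_finrank_le (Submodule.span_le.2 ?_) ?_
    · exact Set.range_subset_iff.2 fun i => show b (.inl i) ∈ L from hbv i ▸ hvL i
    · rw [hL, finrank_span_eq_card (b.linearIndependent.comp _ Sum.inl_injective),
        Fintype.card_fin]
  refine ⟨fun j => b.dotProductDual (.inr j),
    fun j u hu => b.dotProductDual_inr_dotProduct_eq_zero j (hLv ▸ hu),
    fun j y => ⟨bZ.repr y (.inr j), b.dotProductDual_dotProduct_eq_repr hb _ y⟩,
    fun x hint hxL => b.existsUnique_eq_sum_intCast_smul_dotProductDual_inr hb hint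
      fun i => hxL _ (hbv i ▸ hvL i), ?_⟩
  rw [show v = b ∘ Sum.inl from funext fun i => (hbv i).symm]
  refine b.det_gram_inl_eq_det_gram_dotProductDual_inr ?_
  rw [show ⇑b = fun p => A.latticeMap (bZ p) from funext hb, det_gram_latticeMap_basis, hA,
    one_pow]
end

section
/- Let θ₁,…,θ_n ∈ ℝ, let L(Θ) be the line in ℝ^{n+1} spanned by (1, θ₁,…,θ_n), and for u ∈ ℝ^{n+1} let r(u) be the Euclidean distance from u to L(Θ) and h(u) the distance from u to the orthogonal complement L(Θ)^⊥. Let t, α, β > 0 satisfy t^{β-α} ≥ 2, and suppose v ∈ ℤ^{n+1} satisfies r(v) = t^{α-1-β} and h(v) = t^α. Then the cylinder C = {u ∈ ℝ^{n+1} : r(u) < t, t^{-β} ≤ h(u) ≤ t^{-α} - t^{-β}} contains no integer points. -/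
/-!
The inner product of two integer vectors is an integer. Splitting `u` and `v` into their
components along the line `ℝ ∙ e` and orthogonal to it, `|⟪u, v⟫|` differs from `h(u) h(v)` by at
most `r(u) r(v) < t ^ (α - β)`, while the cylinder conditions place `h(u) h(v)` in
`[t ^ (α - β), 1 - t ^ (α - β)]`. Hence `0 < |⟪u, v⟫| < 1`, which is impossible.
-/

open Metric RealInnerProductSpace

namespace Submodule

variable {E : Type*} [NormedAddCommGroup E] [InnerProductSpace ℝ E]
  (K : Submodule ℝ E) [K.HasOrthogonalProjection]

theorem infDist_eq_norm_sub_starProjection (x : E) :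
    infDist x K = ‖x - K.starProjection x‖ := by
  rw [infDist_eq_iInf, starProjection_minimal]
  simp only [dist_eq_norm]
  rfl

theorem infDist_orthogonal_eq_norm_starProjection (x : E) :
    infDist x Kᗮ = ‖K.starProjection x‖ := by
  rw [infDist_eq_norm_sub_starProjection, starProjection_orthogonal_val, sub_sub_cancel]

theorem inner_eq_inner_starProjection_add_inner_starProjection_orthogonal (x y : E) :
    ⟪x, y⟫ = ⟪K.starProjection x, K.starProjection y⟫ +
      ⟪Kᗮ.starProjection x, Kᗮ.starProjection y⟫ := by
  rw [inner_starProjection_left_eq_right, inner_starProjection_left_eq_right Kᗮ, ← inner_add_right,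
    K.starProjection_eq_self_iff.2 (K.starProjection_apply_mem y),
    Kᗮ.starProjection_eq_self_iff.2 (Kᗮ.starProjection_apply_mem y),
    starProjection_add_starProjection_orthogonal]

end Submodule

theorem abs_inner_eq_norm_mul_norm_of_mem_span_singleton {E : Type*} [NormedAddCommGroup E]
    [InnerProductSpace ℝ E] {e x y : E} (hx : x ∈ ℝ ∙ e) (hy : y ∈ ℝ ∙ e) :
    |⟪x, y⟫| = ‖x‖ * ‖y‖ := by
  obtain ⟨c, rfl⟩ := Submodule.mem_span_singleton.1 hx
  obtain ⟨d, rfl⟩ := Submodule.mem_span_singleton.1 hy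
  rw [real_inner_smul_left, real_inner_smul_right, real_inner_self_eq_norm_mul_norm,
    norm_smul, norm_smul, Real.norm_eq_abs, Real.norm_eq_abs, abs_mul, abs_mul,
    abs_mul_self]
  ring

theorem abs_abs_inner_sub_infDist_orthogonal_mul_le {E : Type*} [NormedAddCommGroup E]
    [InnerProductSpace ℝ E] (e x y : E) :
    |(|⟪x, y⟫|) - infDist x (ℝ ∙ e)ᗮ * infDist y (ℝ ∙ e)ᗮ| ≤
      infDist x (ℝ ∙ e) * infDist y (ℝ ∙ e) := by
  set K := ℝ ∙ e
  rw [K.infDist_orthogonal_eq_norm_starProjection, K.infDist_orthogonal_eq_norm_starProjection,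
    K.infDist_eq_norm_sub_starProjection, K.infDist_eq_norm_sub_starProjection,
    ← abs_inner_eq_norm_mul_norm_of_mem_span_singleton (K.starProjection_apply_mem x)
      (K.starProjection_apply_mem y),
    K.inner_eq_inner_starProjection_add_inner_starProjection_orthogonal x y]
  calc _ ≤ |⟪Kᗮ.starProjection x, Kᗮ.starProjection y⟫| :=
        (abs_abs_sub_abs_le_abs_sub _ _).trans_eq (by rw [add_sub_cancel_left])
    _ ≤ _ := by
      simpa only [K.starProjection_orthogonal_val] using abs_real_inner_le_norm _ _

theorem inner_toLp_intCast {ι : Type*} [Fintype ι] (u v : ι → ℤ) :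
    ⟪WithLp.toLp 2 (fun i => (u i : ℝ)), WithLp.toLp 2 (fun i => (v i : ℝ))⟫ =
      ((∑ i, u i * v i : ℤ) : ℝ) := by
  simp [PiLp.inner_apply, mul_comm]

theorem mem_Ioo_of_abs_sub_mul_rpow_le {t α β a ρ η : ℝ} (ht : 0 < t) (hρ : ρ < t)
    (hη₁ : t ^ (-β) ≤ η) (hη₂ : η ≤ t ^ (-α) - t ^ (-β))
    (ha : |a - η * t ^ α| ≤ ρ * t ^ (α - 1 - β)) : a ∈ Set.Ioo 0 1 := by
  have hβα : t ^ (-β) * t ^ α = t ^ (α - β) := by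
    rw [← Real.rpow_add ht]; ring_nf
  have htα : t * t ^ (α - 1 - β) = t ^ (α - β) := by
    rw [mul_comm, ← Real.rpow_add_one ht.ne']; ring_nf
  have hαα : t ^ (-α) * t ^ α = 1 := by
    rw [← Real.rpow_add ht]; simp
  have hρ' : ρ * t ^ (α - 1 - β) < t ^ (α - β) := htα ▸ by gcongr
  have hη₁' : t ^ (α - β) ≤ η * t ^ α := hβα ▸ by gcongr
  have hη₂' : η * t ^ α ≤ 1 - t ^ (α - β) := by
    calc η * t ^ α ≤ (t ^ (-α) - t ^ (-β)) * t ^ α := by gcongr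
      _ = 1 - t ^ (α - β) := by rw [sub_mul, hαα, hβα]
  constructor <;> linarith [(abs_le.1 ha).1, (abs_le.1 ha).2]

theorem empty_cylinder_general (n : ℕ)
    (e : EuclideanSpace ℝ (Fin (n + 1)))
    (r h : EuclideanSpace ℝ (Fin (n + 1)) → ℝ)
    (hr : ∀ u, r u = Metric.infDist u
      ((Submodule.span ℝ {e} : Submodule ℝ (EuclideanSpace ℝ (Fin (n + 1)))) : Set (EuclideanSpace ℝ (Fin (n + 1)))))
    (hh : ∀ u, h u = Metric.infDist u
      (((Submodule.span ℝ {e})ᗮ : Submodule ℝ (EuclideanSpace ℝ (Fin (n + 1)))) : Set (EuclideanSpace ℝ (Fin (n + 1)))))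
    (t α β : ℝ) (ht : 0 < t)
    (v : Fin (n + 1) → ℤ)
    (hrv : r (WithLp.toLp 2 (fun i => (v i : ℝ))) = t ^ (α - 1 - β))
    (hhv : h (WithLp.toLp 2 (fun i => (v i : ℝ))) = t ^ α) :
    ∀ u : Fin (n + 1) → ℤ,
      ¬ (r (WithLp.toLp 2 (fun i => (u i : ℝ))) < t ∧
         t ^ (-β) ≤ h (WithLp.toLp 2 (fun i => (u i : ℝ))) ∧
         h (WithLp.toLp 2 (fun i => (u i : ℝ))) ≤ t ^ (-α) - t ^ (-β)) := by
  rintro u ⟨hru, hhu₁, hhu₂⟩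
  have hclose := abs_abs_inner_sub_infDist_orthogonal_mul_le e
    (WithLp.toLp 2 (fun i => (u i : ℝ))) (WithLp.toLp 2 (fun i => (v i : ℝ)))
  simp only [← hr, ← hh, hrv, hhv, inner_toLp_intCast] at hclose
  obtain ⟨hpos, hlt⟩ := mem_Ioo_of_abs_sub_mul_rpow_le ht hru hhu₁ hhu₂ hclose
  have hzero : ∑ i, u i * v i = 0 := Int.abs_lt_one_iff.1 (by exact_mod_cast hlt)
  simp [hzero] at hpos

/-- Empty cylinder lemma: let L(Θ) be the line spanned by (1, θ₁, …, θ_n) in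
ℝ^{n+1}, r(u) the distance from u to L(Θ) and h(u) the distance from u to
L(Θ)^⊥.  If t^{β-α} ≥ 2 and v ∈ ℤ^{n+1} satisfies r(v) = t^{α-1-β}, h(v) = t^α,
then the cylinder {u : r(u) < t, t^{-β} ≤ h(u) ≤ t^{-α} - t^{-β}} contains no
integer points. -/
theorem empty_cylinder (n : ℕ) (θ : Fin n → ℝ)
    (e : EuclideanSpace ℝ (Fin (n + 1))) (he : ∀ i, e i = (Fin.cons (1 : ℝ) θ : Fin (n + 1) → ℝ) i)
    (r h : EuclideanSpace ℝ (Fin (n + 1)) → ℝ)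
    (hr : ∀ u, r u = Metric.infDist u
      ((Submodule.span ℝ {e} : Submodule ℝ (EuclideanSpace ℝ (Fin (n + 1)))) : Set (EuclideanSpace ℝ (Fin (n + 1)))))
    (hh : ∀ u, h u = Metric.infDist u
      (((Submodule.span ℝ {e})ᗮ : Submodule ℝ (EuclideanSpace ℝ (Fin (n + 1)))) : Set (EuclideanSpace ℝ (Fin (n + 1)))))
    (t α β : ℝ) (ht : 0 < t) (hα : 0 < α) (hβ : 0 < β)
    (htαβ : 2 ≤ t ^ (β - α))
    (v : Fin (n + 1) → ℤ)
    (hrv : r (WithLp.toLp 2 (fun i => (v i : ℝ))) = t ^ (α - 1 - β))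
    (hhv : h (WithLp.toLp 2 (fun i => (v i : ℝ))) = t ^ α) :
    ∀ u : Fin (n + 1) → ℤ,
      ¬ (r (WithLp.toLp 2 (fun i => (u i : ℝ))) < t ∧
         t ^ (-β) ≤ h (WithLp.toLp 2 (fun i => (u i : ℝ))) ∧
         h (WithLp.toLp 2 (fun i => (u i : ℝ))) ≤ t ^ (-α) - t ^ (-β)) :=
  empty_cylinder_general n e r h hr hh t α β ht v hrv hhv
end
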